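/- arXiv:0707.0338 — 4 statements merged into one kernel-verified Lean document; each statement's English description precedes it below -/
import Mathlib

section
/- Let A be a 3×3 real symmetric matrix lying in Γ₂⁺, i.e. satisfying σ₁(A) > 0 and σ₂(A) > 0. Then both matrices −A + σ₁(A)·I and A + (1/3)·σ₁(A)·I are positive definite. -/
/-!
Diagonalizing `A`, both matrices are positive definite iff every eigenvalue `λᵢ` satisfies
`-σ₁/3 < λᵢ < σ₁`, where `σ₁, σ₂` are the elementary symmetric functions of the eigenvalues
`a, b, c`. Writing `σ₂ = a (b + c) + b c` with `b c ≤ (b + c)² / 4`: if `b + c ≤ 0` then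
`a (b + c) ≤ -(b + c)²` and so `σ₂ ≤ 0`; hence `b + c > 0`, i.e. `a < σ₁`, and then
`a (b + c) > -b c ≥ -(b + c)² / 4` gives `4a + b + c > 0`, i.e. `a > -σ₁/3`.
-/

open Matrix Unitary
open scoped ComplexOrder

namespace Matrix.IsHermitian

variable {n 𝕜 : Type*} [Fintype n] [DecidableEq n] [RCLike 𝕜] {A : Matrix n n 𝕜}

lemma smul_add_smul_one_eq_conjStarAlgAut (hA : A.IsHermitian) (a c : ℝ) :
    a • A + c • (1 : Matrix n n 𝕜) = conjStarAlgAut 𝕜 _ hA.eigenvectorUnitary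
      (diagonal (RCLike.ofReal ∘ fun i ↦ a * hA.eigenvalues i + c)) := by
  have hdiag : diagonal (RCLike.ofReal ∘ fun i ↦ a * hA.eigenvalues i + c) =
      (a : 𝕜) • diagonal (RCLike.ofReal ∘ hA.eigenvalues) + (c : 𝕜) • (1 : Matrix n n 𝕜) := by
    rw [smul_one_eq_diagonal, ← diagonal_smul, diagonal_add]
    congr 1
    ext i
    simp only [Function.comp_apply, Pi.smul_apply, smul_eq_mul]
    push_cast
    ring
  rw [hdiag, map_add, map_smul, map_smul, map_one, ← hA.spectral_theorem,
    RCLike.real_smul_eq_coe_smul (K := 𝕜) a, RCLike.real_smul_eq_coe_smul (K := 𝕜) c]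

lemma posDef_smul_add_smul_one_iff (hA : A.IsHermitian) (a c : ℝ) :
    (a • A + c • (1 : Matrix n n 𝕜)).PosDef ↔ ∀ i, 0 < a * hA.eigenvalues i + c := by
  rw [hA.smul_add_smul_one_eq_conjStarAlgAut, conjStarAlgAut_apply,
    isUnit_coe.posDef_star_right_conjugate_iff, posDef_diagonal_iff]
  simp only [Function.comp_apply, RCLike.ofReal_pos]

lemma trace_mul_self_eq_sum_sq_eigenvalues (hA : A.IsHermitian) :
    (A * A).trace = ∑ i, ((hA.eigenvalues i ^ 2 : ℝ) : 𝕜) := by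
  conv_lhs => rw [hA.spectral_theorem, ← map_mul, conjStarAlgAut_apply, trace_mul_cycle,
    coe_star_mul_self, one_mul, diagonal_mul_diagonal, trace_diagonal]
  simp [sq]

end Matrix.IsHermitian

lemma mem_Ioo_of_sigma_pos {a b c : ℝ} (hσ₁ : 0 < a + b + c)
    (hσ₂ : 0 < a * b + a * c + b * c) :
    a ∈ Set.Ioo (-(a + b + c) / 3) (a + b + c) := by
  have hbc : 0 < b + c := by nlinarith [sq_nonneg (b - c)]
  exact ⟨by nlinarith [sq_nonneg (b - c)], by linarith⟩

lemma apply_mem_Ioo_of_sigma_pos (x : Fin 3 → ℝ) (hσ₁ : 0 < ∑ i, x i)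
    (hσ₂ : 0 < ((∑ i, x i) ^ 2 - ∑ i, x i ^ 2) / 2) (i : Fin 3) :
    x i ∈ Set.Ioo (-(∑ j, x j) / 3) (∑ j, x j) := by
  simp only [Fin.sum_univ_three] at hσ₁ hσ₂ ⊢
  have hq : 0 < x 0 * x 1 + x 0 * x 2 + x 1 * x 2 := by linarith
  match i with
  | 0 => exact mem_Ioo_of_sigma_pos hσ₁ hq
  | 1 =>
    have h := mem_Ioo_of_sigma_pos (a := x 1) (b := x 0) (c := x 2) (by linarith) (by linarith)
    exact ⟨by linarith [h.1], by linarith [h.2]⟩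
  | 2 =>
    have h := mem_Ioo_of_sigma_pos (a := x 2) (b := x 0) (c := x 1) (by linarith) (by linarith)
    exact ⟨by linarith [h.1], by linarith [h.2]⟩

theorem gamma2_plus_posdef (A : Matrix (Fin 3) (Fin 3) ℝ) (hA : A.IsSymm)
    (h1 : 0 < Matrix.trace A)
    (h2 : 0 < ((Matrix.trace A) ^ 2 - Matrix.trace (A * A)) / 2) :
    (-A + Matrix.trace A • (1 : Matrix (Fin 3) (Fin 3) ℝ)).PosDef ∧
    (A + (1 / 3 : ℝ) • Matrix.trace A • (1 : Matrix (Fin 3) (Fin 3) ℝ)).PosDef := by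
  have hH : A.IsHermitian := isHermitian_iff_isSymm.mpr hA
  have htr : A.trace = ∑ i, hH.eigenvalues i := by simpa using hH.trace_eq_sum_eigenvalues
  have htr2 : (A * A).trace = ∑ i, hH.eigenvalues i ^ 2 := by
    simpa using hH.trace_mul_self_eq_sum_sq_eigenvalues
  rw [htr] at h1
  rw [htr, htr2] at h2
  have hbounds := apply_mem_Ioo_of_sigma_pos hH.eigenvalues h1 h2
  constructor
  · simpa using (hH.posDef_smul_add_smul_one_iff (-1) A.trace).mpr fun i ↦ by
      linarith [(hbounds i).2]
  · simpa [smul_smul] using (hH.posDef_smul_add_smul_one_iff 1 (1 / 3 * A.trace)).mpr fun i ↦ by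
      linarith [(hbounds i).1]
end

section
/- Let A be a 3×3 real symmetric matrix and let t ≤ 2/3 be a real number. Suppose that the matrix Aᵗ := A + (1−t)(tr A)·I satisfies σ₁(Aᵗ) > 0 and σ₂(Aᵗ) > 0. Then tr A > 0 and A < (3−2t)(tr A)·I, i.e. (3−2t)(tr A)·I − A is positive definite. (Applied to the Schouten tensor A = A¹_g̃, this is the pointwise inequality A¹_g̃ < (3−2t)σ₁(g̃⁻¹A¹_g̃)·g̃ used in the proof of the gradient-term estimate.) -/
/-!
Put `B = A + (1 - t) (tr A) I`. Then `tr B = (4 - 3t) tr A`, which gives `tr A > 0`, and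
`(tr B) I - B = (3 - 2t) (tr A) I - A`. Positivity of `σ₂(B)` says `tr (B²) < (tr B)²`, while
Cauchy–Schwarz over the entries gives `(vᵀ B v)² ≤ tr (Bᵀ B) |v|⁴ = tr (B²) |v|⁴`;
hence `|vᵀ B v| < (tr B) |v|²`, i.e. `(tr B) I - B` is positive definite.
-/

open Matrix

namespace Matrix

variable {n : Type*} [Fintype n]

theorem trace_transpose_mul_self_eq_sum_sq (B : Matrix n n ℝ) :
    trace (Bᵀ * B) = ∑ ij : n × n, B ij.1 ij.2 ^ 2 := by
  simp only [trace, diag_apply, mul_apply, transpose_apply, Fintype.sum_prod_type, sq]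
  exact Finset.sum_comm

theorem dotProduct_mulVec_sq_le (B : Matrix n n ℝ) (v : n → ℝ) :
    (v ⬝ᵥ B *ᵥ v) ^ 2 ≤ trace (Bᵀ * B) * (v ⬝ᵥ v) ^ 2 := by
  have hBv : v ⬝ᵥ B *ᵥ v = ∑ ij : n × n, B ij.1 ij.2 * (v ij.1 * v ij.2) := by
    simp only [dotProduct, mulVec, Fintype.sum_prod_type, Finset.mul_sum]
    exact Finset.sum_congr rfl fun _ _ => Finset.sum_congr rfl fun _ _ => by ring
  have hvv : (v ⬝ᵥ v) ^ 2 = ∑ ij : n × n, (v ij.1 * v ij.2) ^ 2 := by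
    simp only [dotProduct, sq, Fintype.sum_prod_type, Finset.sum_mul_sum]
    exact Finset.sum_congr rfl fun _ _ => Finset.sum_congr rfl fun _ _ => by ring
  rw [hBv, hvv, trace_transpose_mul_self_eq_sum_sq]
  exact Finset.sum_mul_sq_le_sq_mul_sq _ _ _

theorem posDef_trace_smul_one_sub [DecidableEq n] {B : Matrix n n ℝ} (hB : B.IsSymm)
    (htr : 0 < trace B) (hsq : trace (B * B) < trace B ^ 2) :
    (trace B • (1 : Matrix n n ℝ) - B).PosDef := by
  have hHerm : (trace B • (1 : Matrix n n ℝ) - B).IsHermitian := by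
    simp only [IsHermitian, conjTranspose_eq_transpose_of_trivial, transpose_sub,
      transpose_smul, transpose_one, hB.eq]
  refine PosDef.of_dotProduct_mulVec_pos hHerm fun v hv => ?_
  have hvv : 0 < v ⬝ᵥ v := by simpa using dotProduct_self_star_pos_iff.mpr hv
  have hsq' : (v ⬝ᵥ B *ᵥ v) ^ 2 < (trace B * (v ⬝ᵥ v)) ^ 2 := calc
    (v ⬝ᵥ B *ᵥ v) ^ 2 ≤ trace (B * B) * (v ⬝ᵥ v) ^ 2 := by
      simpa only [hB.eq] using dotProduct_mulVec_sq_le B v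
    _ < trace B ^ 2 * (v ⬝ᵥ v) ^ 2 := by gcongr
    _ = (trace B * (v ⬝ᵥ v)) ^ 2 := by ring
  have hlt := lt_of_pow_lt_pow_left₀ 2 (by positivity) hsq'
  simp only [star_trivial, sub_mulVec, smul_mulVec, one_mulVec, dotProduct_sub,
    dotProduct_smul, smul_eq_mul]
  linarith

end Matrix

theorem schouten_upper_bound (A : Matrix (Fin 3) (Fin 3) ℝ) (hA : A.IsSymm)
    (t : ℝ) (ht : t ≤ 2 / 3)
    (h1 : 0 < Matrix.trace (A + ((1 - t) * Matrix.trace A) • (1 : Matrix (Fin 3) (Fin 3) ℝ)))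
    (h2 : 0 < ((Matrix.trace (A + ((1 - t) * Matrix.trace A) • (1 : Matrix (Fin 3) (Fin 3) ℝ))) ^ 2
        - Matrix.trace ((A + ((1 - t) * Matrix.trace A) • (1 : Matrix (Fin 3) (Fin 3) ℝ))
          * (A + ((1 - t) * Matrix.trace A) • (1 : Matrix (Fin 3) (Fin 3) ℝ)))) / 2) :
    0 < Matrix.trace A ∧
    (((3 - 2 * t) * Matrix.trace A) • (1 : Matrix (Fin 3) (Fin 3) ℝ) - A).PosDef := by
  set B := A + ((1 - t) * trace A) • (1 : Matrix (Fin 3) (Fin 3) ℝ)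
  have htrB : trace B = (4 - 3 * t) * trace A := by
    simp only [B, trace_add, trace_smul, trace_one, Fintype.card_fin, smul_eq_mul]
    ring
  have htrA : 0 < trace A := pos_of_mul_pos_right (htrB ▸ h1) (by linarith)
  have hBsymm : B.IsSymm := hA.add (isSymm_one.smul _)
  have hshift : trace B • 1 - B = ((3 - 2 * t) * trace A) • 1 - A := by
    rw [htrB]
    module
  exact ⟨htrA, hshift ▸ posDef_trace_smul_one_sub hBsymm h1 (by linarith)⟩
end

section
/- For every real number t one has 128·P₂(t) ≥ (5−4t)², where P₂(t) := (1/16)(1−t)(5−3t) − (1/24)(7/10 − t). Consequently, for t < 5/4 and with the choice ε(t) := 32·P₂(t)/(5−4t) > 0, the three coefficient inequalities used in the lower-bound estimate hold: 8P₂(t)/ε(t) − (1−t) − 1/4 = 0, 2P₂(t)/ε(t) − (1−t)/4 ≥ 0, and (3−2t)/4 − P₂(t)/ε(t)² − 4P₂(t)/ε(t) ≥ 0. -/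
/-!
Completing the square gives `128 P₂(t) - (5 - 4t)² = 8 (t - 7/6)² + 17/45`, so `P₂ > 0` everywhere.
The choice `ε = 32 P₂ / (5 - 4t)` makes `P₂ / ε = (5 - 4t) / 32`; with this the first two
coefficients are the constants `0` and `1/16`, and the third is `1/8 - (5 - 4t)² / (1024 P₂)`,
which is nonnegative by the square bound.
-/

noncomputable section

namespace SigmaTwoLowerBound

def P₂ (t : ℝ) : ℝ := (1 / 16) * (1 - t) * (5 - 3 * t) - (1 / 24) * (7 / 10 - t)

def youngParam (t : ℝ) : ℝ := 32 * P₂ t / (5 - 4 * t)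

theorem mul_P₂_sub_sq (t : ℝ) : 128 * P₂ t - (5 - 4 * t) ^ 2 = 8 * (t - 7 / 6) ^ 2 + 17 / 45 := by
  unfold P₂; ring

theorem sq_le_mul_P₂ (t : ℝ) : (5 - 4 * t) ^ 2 ≤ 128 * P₂ t := by
  nlinarith [mul_P₂_sub_sq t, sq_nonneg (t - 7 / 6)]

theorem P₂_pos (t : ℝ) : 0 < P₂ t := by
  nlinarith [mul_P₂_sub_sq t, sq_nonneg (t - 7 / 6), sq_nonneg (5 - 4 * t)]

theorem youngParam_pos {t : ℝ} (ht : t < 5 / 4) : 0 < youngParam t := by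
  have := P₂_pos t
  unfold youngParam
  exact div_pos (by positivity) (by linarith)

/-- This holds also at `t = 5/4`, where both sides vanish because `x / 0 = 0`. -/
theorem P₂_div_youngParam (t : ℝ) : P₂ t / youngParam t = (5 - 4 * t) / 32 := by
  rw [youngParam, div_div_eq_mul_div, mul_comm, mul_div_mul_right _ _ (P₂_pos t).ne']

theorem P₂_div_youngParam_sq (t : ℝ) :
    P₂ t / youngParam t ^ 2 = (5 - 4 * t) ^ 2 / (1024 * P₂ t) := by
  have hP := (P₂_pos t).ne'
  calc P₂ t / youngParam t ^ 2 = (P₂ t / youngParam t) ^ 2 / P₂ t := by field_simp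
    _ = (5 - 4 * t) ^ 2 / (1024 * P₂ t) := by rw [P₂_div_youngParam]; ring

end SigmaTwoLowerBound

end

open SigmaTwoLowerBound in
theorem coefficient_inequalities (t : ℝ) :
    128 * ((1 / 16) * (1 - t) * (5 - 3 * t) - (1 / 24) * (7 / 10 - t)) ≥ (5 - 4 * t) ^ 2 ∧
    (t < 5 / 4 →
      letI P₂ := (1 / 16) * (1 - t) * (5 - 3 * t) - (1 / 24) * (7 / 10 - t)
      letI ε := 32 * P₂ / (5 - 4 * t)
      0 < ε ∧
      8 * P₂ / ε - (1 - t) - 1 / 4 = 0 ∧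
      2 * P₂ / ε - (1 - t) / 4 ≥ 0 ∧
      (3 - 2 * t) / 4 - P₂ / ε ^ 2 - 4 * P₂ / ε ≥ 0) := by
  refine ⟨sq_le_mul_P₂ t, fun ht => ?_⟩
  show 0 < youngParam t ∧
    8 * P₂ t / youngParam t - (1 - t) - 1 / 4 = 0 ∧
    2 * P₂ t / youngParam t - (1 - t) / 4 ≥ 0 ∧
    (3 - 2 * t) / 4 - P₂ t / youngParam t ^ 2 - 4 * P₂ t / youngParam t ≥ 0
  simp only [mul_div_assoc, P₂_div_youngParam, P₂_div_youngParam_sq]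
  have hP := P₂_pos t
  have hsq : (5 - 4 * t) ^ 2 / (1024 * P₂ t) ≤ 1 / 8 := by
    rw [div_le_iff₀ (by positivity)]; linarith [sq_le_mul_P₂ t]
  refine ⟨youngParam_pos ht, by ring, by linarith, by linarith⟩
end

section
/- Let (λ₁, λ₂, λ₃) ∈ ℝ³ satisfy σ₁(λ) > 0 and σ₂(λ) > 0. Then each λᵢ satisfies −(1/3)σ₁(λ) < λᵢ < σ₁(λ); in particular the sum of any two of the λᵢ is positive. -/
/-!
Write `s = λ₂ + λ₃`. From `λ₂ λ₃ ≤ s² / 4` we get `4 σ₂ ≤ s (4 λ₁ + s)`, where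
`4 λ₁ + s = 4 σ₁ - 3 s`. If `s ≤ 0` the right side is `≤ 0`, contradicting `σ₂ > 0`; hence `s > 0`,
i.e. `λ₁ < σ₁`, and then the same inequality forces `4 λ₁ + s > 0`, i.e. `λ₁ > -σ₁ / 3`.
The other eigenvalues follow by symmetry.
-/

section Gamma2

variable {a b c : ℝ}

theorem four_mul_sigma2_le : 4 * (a * b + a * c + b * c) ≤ (b + c) * (4 * a + (b + c)) := by
  nlinarith [sq_nonneg (b - c)]

theorem add_pos_of_sigma1_pos_of_sigma2_pos (h1 : 0 < a + b + c)
    (h2 : 0 < a * b + a * c + b * c) : 0 < b + c := by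
  by_contra! hs
  have : (b + c) * (4 * a + (b + c)) ≤ 0 :=
    mul_nonpos_of_nonpos_of_nonneg hs (by linarith)
  linarith [four_mul_sigma2_le (a := a) (b := b) (c := c)]

theorem neg_third_sigma1_lt_of_sigma2_pos (h1 : 0 < a + b + c)
    (h2 : 0 < a * b + a * c + b * c) : -(1 / 3) * (a + b + c) < a := by
  have hs := add_pos_of_sigma1_pos_of_sigma2_pos h1 h2
  have : 0 < 4 * a + (b + c) :=
    pos_of_mul_pos_right (by linarith [four_mul_sigma2_le (a := a) (b := b) (c := c)]) hs.le
  linarith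

end Gamma2

theorem gamma2_eigenvalue_bounds (l₁ l₂ l₃ : ℝ)
    (h1 : 0 < l₁ + l₂ + l₃) (h2 : 0 < l₁ * l₂ + l₁ * l₃ + l₂ * l₃) :
    (-(1 / 3) * (l₁ + l₂ + l₃) < l₁ ∧ l₁ < l₁ + l₂ + l₃) ∧
    (-(1 / 3) * (l₁ + l₂ + l₃) < l₂ ∧ l₂ < l₁ + l₂ + l₃) ∧
    (-(1 / 3) * (l₁ + l₂ + l₃) < l₃ ∧ l₃ < l₁ + l₂ + l₃) ∧
    0 < l₁ + l₂ ∧ 0 < l₁ + l₃ ∧ 0 < l₂ + l₃ := by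
  have h1₂ : 0 < l₂ + l₁ + l₃ := by linarith
  have h2₂ : 0 < l₂ * l₁ + l₂ * l₃ + l₁ * l₃ := by linarith
  have h1₃ : 0 < l₃ + l₁ + l₂ := by linarith
  have h2₃ : 0 < l₃ * l₁ + l₃ * l₂ + l₁ * l₂ := by linarith
  have pos₂₃ := add_pos_of_sigma1_pos_of_sigma2_pos h1 h2
  have pos₁₃ := add_pos_of_sigma1_pos_of_sigma2_pos h1₂ h2₂
  have pos₁₂ := add_pos_of_sigma1_pos_of_sigma2_pos h1₃ h2₃
  have lo₁ := neg_third_sigma1_lt_of_sigma2_pos h1 h2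
  have lo₂ := neg_third_sigma1_lt_of_sigma2_pos h1₂ h2₂
  have lo₃ := neg_third_sigma1_lt_of_sigma2_pos h1₃ h2₃
  refine ⟨⟨lo₁, ?_⟩, ⟨?_, ?_⟩, ⟨?_, ?_⟩, pos₁₂, pos₁₃, pos₂₃⟩ <;> linarith
end
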